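/- Let 1/2 < H < 1 and let ρ be a real number with -1 < ρ < 2(H-1). Then for every k ∈ ℤ²₀ the series ∑_{h ∈ ℤ²₀, h ≠ k} |h|^{2ρ+2}/(|h|^{4H} |k-h|^{4H}) converges, and there exists a constant C > 0 (depending only on H and ρ) such that its sum S₂(k) satisfies S₂(k) ≤ C / |k|^{4H-2ρ-2} for all k ∈ ℤ²₀. -/

import Mathlib

/-!
With `a = 4H - 2ρ - 2 > 2`, the conditions `2ρ + 2 ≥ 0` and `|k - h| ≥ 1` bound each term by
`|h|^(-a) |k - h|^(-a)`. The larger of `|h|`, `|k - h|` is at least `|k| / 2`, so the term is at most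
`2^a |k|^(-a) (|h|^(-a) + |k - h|^(-a))`, and summing over `h` gives `2^(a+1) (∑ |h|^(-a)) |k|^(-a)`;
the lattice sum converges because `a > 2`.
-/

/-- Euclidean norm of an element of `ℤ²`. -/
noncomputable def znorm (k : ℤ × ℤ) : ℝ :=
  Real.sqrt ((k.1 : ℝ) ^ 2 + (k.2 : ℝ) ^ 2)

open Real

namespace Real

lemma rpow_neg_mul_rpow_neg_le {a x y z : ℝ} (ha : 0 ≤ a) (hx : 0 < x) (hy : 0 < y)
    (hz : 0 < z) (hxyz : z ≤ x + y) :
    x ^ (-a) * y ^ (-a) ≤ 2 ^ a * z ^ (-a) * (x ^ (-a) + y ^ (-a)) := by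
  wlog hxy : x ≤ y generalizing x y
  · rw [mul_comm, add_comm]
    exact this hy hx (by linarith) (by linarith)
  have hz2 : (z / 2) ^ (-a) = 2 ^ a * z ^ (-a) := by
    rw [div_rpow hz.le zero_le_two, rpow_neg hz.le, rpow_neg zero_le_two, div_inv_eq_mul,
      mul_comm]
  -- `y` is the larger of the two, so `z / 2 ≤ y`.
  have hy_le : y ^ (-a) ≤ 2 ^ a * z ^ (-a) :=
    hz2 ▸ rpow_le_rpow_of_nonpos (by positivity) (by linarith) (neg_nonpos.mpr ha)
  calc x ^ (-a) * y ^ (-a) ≤ x ^ (-a) * (2 ^ a * z ^ (-a)) := by gcongr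
    _ ≤ (x ^ (-a) + y ^ (-a)) * (2 ^ a * z ^ (-a)) := by
      gcongr
      exact le_add_of_nonneg_right (by positivity)
    _ = 2 ^ a * z ^ (-a) * (x ^ (-a) + y ^ (-a)) := mul_comm _ _

lemma rpow_div_rpow_mul_rpow_le {c d x y : ℝ} (hc : 0 ≤ c) (hx : 0 < x) (hy : 1 ≤ y) :
    x ^ c / (x ^ d * y ^ d) ≤ x ^ (-(d - c)) * y ^ (-(d - c)) := by
  have hy0 : 0 < y := one_pos.trans_le hy
  rw [div_le_iff₀ (by positivity), mul_mul_mul_comm, ← rpow_add hx, ← rpow_add hy0,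
    show -(d - c) + d = c by ring]
  exact le_mul_of_one_le_right (by positivity) (one_le_rpow hy hc)

end Real

lemma znorm_nonneg (k : ℤ × ℤ) : 0 ≤ znorm k := sqrt_nonneg _

lemma one_le_znorm {k : ℤ × ℤ} (hk : k ≠ 0) : 1 ≤ znorm k := by
  have hpos : (0 : ℤ) < k.1 ^ 2 + k.2 ^ 2 := by
    rcases k with ⟨m, n⟩
    rcases eq_or_ne m 0 with rfl | hm
    · have hn : n ≠ 0 := fun hn => hk (by simp [hn])
      positivity
    · positivity
  rw [znorm, one_le_sqrt]
  exact_mod_cast hpos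

lemma znorm_pos {k : ℤ × ℤ} (hk : k ≠ 0) : 0 < znorm k := one_pos.trans_le (one_le_znorm hk)

lemma znorm_eq_norm (k : ℤ × ℤ) : znorm k = ‖(⟨k.1, k.2⟩ : ℂ)‖ := by
  rw [znorm, Complex.norm_def, Complex.normSq_mk, sq, sq]

lemma znorm_le_add_znorm_sub (k h : ℤ × ℤ) : znorm k ≤ znorm h + znorm (k - h) := by
  simp only [znorm_eq_norm]
  refine le_of_eq_of_le (congrArg _ ?_) (norm_add_le (⟨h.1, h.2⟩ : ℂ) ⟨(k - h).1, (k - h).2⟩)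
  apply Complex.ext <;> simp

lemma summable_znorm_rpow_neg {a : ℝ} (ha : 2 < a) :
    Summable fun h : ℤ × ℤ => znorm h ^ (-a) := by
  rw [← (finTwoArrowEquiv ℤ).summable_iff]
  refine (EisensteinSeries.summable_one_div_norm_rpow ha).of_nonneg_of_le
    (fun x => rpow_nonneg (znorm_nonneg _) _) (fun x => ?_)
  rcases eq_or_ne x 0 with rfl | hx
  · simp [znorm, zero_rpow (by linarith : -a ≠ 0)]
  refine rpow_le_rpow_of_nonpos (norm_pos_iff.mpr hx) ?_ (by linarith)
  rw [pi_norm_le_iff_of_nonneg (znorm_nonneg _)]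
  intro i
  rw [Int.norm_eq_abs, ← sqrt_sq_eq_abs]
  apply sqrt_le_sqrt
  fin_cases i <;> simp [finTwoArrowEquiv] <;> positivity

lemma hasSum_znorm_rpow_neg_add_sub {a : ℝ} (ha : 2 < a) (k : ℤ × ℤ) :
    HasSum (fun h => znorm h ^ (-a) + znorm (k - h) ^ (-a)) (2 * ∑' h, znorm h ^ (-a)) := by
  have hS := (summable_znorm_rpow_neg ha).hasSum
  rw [two_mul]
  exact hS.add ((Equiv.subLeft k).hasSum_iff.mpr hS)

lemma znorm_rpow_div_le {c d : ℝ} (hc : 0 ≤ c) (hcd : c ≤ d) {k h : ℤ × ℤ} (hk : k ≠ 0)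
    (hh : h ≠ 0) (hhk : h ≠ k) :
    znorm h ^ c / (znorm h ^ d * znorm (k - h) ^ d) ≤
      2 ^ (d - c) * znorm k ^ (-(d - c)) * (znorm h ^ (-(d - c)) + znorm (k - h) ^ (-(d - c))) :=
  (rpow_div_rpow_mul_rpow_le hc (znorm_pos hh) (one_le_znorm (sub_ne_zero.mpr hhk.symm))).trans
    (rpow_neg_mul_rpow_neg_le (sub_nonneg.mpr hcd) (znorm_pos hh)
      (znorm_pos (sub_ne_zero.mpr hhk.symm)) (znorm_pos hk) (znorm_le_add_znorm_sub k h))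

lemma summable_subtype_and_tsum_le_of_le_hasSum {α : Type*} {p : α → Prop} {f g : α → ℝ}
    {A : ℝ} (hf : ∀ x, p x → 0 ≤ f x) (hfg : ∀ x, p x → f x ≤ g x) (hg : ∀ x, 0 ≤ g x)
    (hgA : HasSum g A) :
    Summable (fun x : Subtype p => f x) ∧ ∑' x : Subtype p, f x ≤ A := by
  have hsum : Summable (fun x : Subtype p => f x) :=
    (hgA.summable.subtype p).of_nonneg_of_le (fun x => hf x x.2) (fun x => hfg x x.2)
  refine ⟨hsum, ?_⟩
  calc ∑' x : Subtype p, f x ≤ ∑' x : Subtype p, g x :=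
        hsum.tsum_le_tsum (fun x => hfg x x.2) (hgA.summable.subtype p)
    _ ≤ ∑' x, g x := hgA.summable.tsum_subtype_le g {x | p x} hg
    _ = A := hgA.tsum_eq

theorem statement_5_general (H ρ : ℝ)
    (hρ1 : -1 < ρ) (hρ2 : ρ < 2 * (H - 1)) :
    (∀ k : ℤ × ℤ, k ≠ 0 →
      Summable (fun h : {h : ℤ × ℤ // h ≠ 0 ∧ h ≠ k} =>
        znorm h.1 ^ (2 * ρ + 2) / (znorm h.1 ^ (4 * H) * znorm (k - h.1) ^ (4 * H)))) ∧
    ∃ C : ℝ, 0 < C ∧ ∀ k : ℤ × ℤ, k ≠ 0 →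
      (∑' h : {h : ℤ × ℤ // h ≠ 0 ∧ h ≠ k},
          znorm h.1 ^ (2 * ρ + 2) / (znorm h.1 ^ (4 * H) * znorm (k - h.1) ^ (4 * H)))
        ≤ C / znorm k ^ (4 * H - 2 * ρ - 2) := by
  set a := 4 * H - 2 * ρ - 2
  have ha : 2 < a := by linarith
  have hbound (k : ℤ × ℤ) (hk : k ≠ 0) :=
    summable_subtype_and_tsum_le_of_le_hasSum (p := fun h => h ≠ 0 ∧ h ≠ k)
      (f := fun h => znorm h ^ (2 * ρ + 2) / (znorm h ^ (4 * H) * znorm (k - h) ^ (4 * H)))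
      (fun h _ => by unfold znorm; positivity)
      (fun h hh => by
        simpa only [show 4 * H - (2 * ρ + 2) = a by ring] using
          znorm_rpow_div_le (c := 2 * ρ + 2) (d := 4 * H) (by linarith) (by linarith) hk hh.1 hh.2)
      (fun h => by unfold znorm; positivity)
      ((hasSum_znorm_rpow_neg_add_sub ha k).mul_left (2 ^ a * znorm k ^ (-a)))
  have hS : 0 < ∑' h, znorm h ^ (-a) :=
    (summable_znorm_rpow_neg ha).tsum_pos (fun _ => by unfold znorm; positivity) (1, 0)
      (by simp [znorm])
  refine ⟨fun k hk => (hbound k hk).1, 2 ^ a * (2 * ∑' h, znorm h ^ (-a)), by positivity,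
    fun k hk => ?_⟩
  rw [div_eq_mul_inv, ← rpow_neg (znorm_nonneg k), mul_right_comm]
  exact (hbound k hk).2

theorem statement_5 (H ρ : ℝ) (hH1 : 1 / 2 < H) (hH2 : H < 1)
    (hρ1 : -1 < ρ) (hρ2 : ρ < 2 * (H - 1)) :
    (∀ k : ℤ × ℤ, k ≠ 0 →
      Summable (fun h : {h : ℤ × ℤ // h ≠ 0 ∧ h ≠ k} =>
        znorm h.1 ^ (2 * ρ + 2) / (znorm h.1 ^ (4 * H) * znorm (k - h.1) ^ (4 * H)))) ∧
    ∃ C : ℝ, 0 < C ∧ ∀ k : ℤ × ℤ, k ≠ 0 →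
      (∑' h : {h : ℤ × ℤ // h ≠ 0 ∧ h ≠ k},
          znorm h.1 ^ (2 * ρ + 2) / (znorm h.1 ^ (4 * H) * znorm (k - h.1) ^ (4 * H)))
        ≤ C / znorm k ^ (4 * H - 2 * ρ - 2) :=
  statement_5_general H ρ hρ1 hρ2
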